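/- arXiv:1705.01003 — 2 statements merged into one kernel-verified Lean document; each statement's English description precedes it below -/
import Mathlib

section
/- Let u ∈ H¹(ℝ), v ∈ L²(ℝ) real-valued, and suppose ‖∂_x u‖²_{L²} + ‖v‖²_{L²} ≤ -2∫ v|u|² dx + E₀ for some E₀ ∈ ℝ. If ‖u‖_{L²} ≤ r, then ‖∂_x u‖²_{L²} + ‖v‖²_{L²} ≤ 4 C⁸ r⁶ + 2 E₀, where C is the Gagliardo–Nirenberg constant in ‖f‖_{L⁴} ≤ C ‖f‖_{L²}^{3/4} ‖∂_x f‖_{L²}^{1/4}. -/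
open MeasureTheory

noncomputable def L2C (f : ℝ → ℂ) : ℝ := (eLpNorm f 2 (volume : Measure ℝ)).toReal
noncomputable def L2R (f : ℝ → ℝ) : ℝ := (eLpNorm f 2 (volume : Measure ℝ)).toReal
noncomputable def L4C (f : ℝ → ℂ) : ℝ := (eLpNorm f 4 (volume : Measure ℝ)).toReal

/-!
By Hölder, `|∫ v |u|²| ≤ ‖v‖₂ ‖u‖₄²`, and by Young, `2 ‖v‖₂ ‖u‖₄² ≤ ‖v‖₂² / 2 + 2 ‖u‖₄⁴`.
Gagliardo–Nirenberg bounds `‖u‖₄⁴` by `c ‖∂ₓu‖₂` with `c = C⁴ r³`, and one more Young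
inequality `2 c ‖∂ₓu‖₂ ≤ ‖∂ₓu‖₂² / 2 + 2 c²` absorbs the rest into the left-hand side.
-/

section Holder

variable {α E : Type*} [MeasurableSpace α] {μ : Measure α} [NormedAddCommGroup E]

theorem norm_integral_le_toReal_eLpNorm_one [NormedSpace ℝ E] (f : α → E) :
    ‖∫ x, f x ∂μ‖ ≤ (eLpNorm f 1 μ).toReal := by
  by_cases hf : Integrable f μ
  · calc ‖∫ x, f x ∂μ‖ ≤ ∫ x, ‖f x‖ ∂μ := norm_integral_le_integral_norm f
      _ = (eLpNorm f 1 μ).toReal := by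
        rw [integral_norm_eq_lintegral_enorm hf.1, eLpNorm_one_eq_lintegral_enorm]
  · simp [integral_undef hf]

theorem eLpNorm_norm_sq (f : α → E) :
    eLpNorm (fun x => ‖f x‖ ^ 2) 2 μ = eLpNorm f 4 μ ^ 2 := by
  have h := eLpNorm_norm_rpow (p := 2) (μ := μ) f two_pos
  norm_num at h
  rw [← h]

theorem abs_integral_mul_norm_sq_le {v : α → ℝ} {f : α → E} (hv : MemLp v 2 μ)
    (hf : MemLp f 4 μ) :
    |∫ x, v x * ‖f x‖ ^ 2 ∂μ| ≤ (eLpNorm v 2 μ).toReal * (eLpNorm f 4 μ).toReal ^ 2 := by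
  have hf2 : MemLp (fun x => ‖f x‖ ^ 2) 2 μ :=
    ⟨hf.1.norm.pow 2, by rw [eLpNorm_norm_sq]; exact ENNReal.pow_lt_top hf.eLpNorm_lt_top⟩
  calc |∫ x, v x * ‖f x‖ ^ 2 ∂μ| ≤ (eLpNorm (v • fun x => ‖f x‖ ^ 2) 1 μ).toReal :=
        Real.norm_eq_abs _ ▸ norm_integral_le_toReal_eLpNorm_one _
    _ ≤ (eLpNorm v 2 μ * eLpNorm (fun x => ‖f x‖ ^ 2) 2 μ).toReal :=
        ENNReal.toReal_mono (ENNReal.mul_ne_top hv.eLpNorm_ne_top hf2.eLpNorm_ne_top)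
          (eLpNorm_smul_le_mul_eLpNorm hf2.1 hv.1)
    _ = (eLpNorm v 2 μ).toReal * (eLpNorm f 4 μ).toReal ^ 2 := by
        rw [eLpNorm_norm_sq, ENNReal.toReal_mul, ENNReal.toReal_pow]

end Holder

theorem sq_add_sq_le_of_le_two_mul_add {A B M E c : ℝ} (hE : A ^ 2 + B ^ 2 ≤ 2 * B * M + E)
    (hM : M ^ 2 ≤ c * A) : A ^ 2 + B ^ 2 ≤ 4 * c ^ 2 + 2 * E := by
  nlinarith [sq_nonneg (B - 2 * M), sq_nonneg (A - 2 * c)]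

theorem pow_four_le_of_gagliardoNirenberg {L K A C r : ℝ} (hL : 0 ≤ L) (hK : 0 ≤ K)
    (hA : 0 ≤ A) (hKr : K ≤ r)
    (hGN : L ≤ C * K ^ ((3 : ℝ) / 4) * A ^ ((1 : ℝ) / 4)) :
    L ^ 4 ≤ C ^ 4 * r ^ 3 * A := by
  have hpow : ∀ {x : ℝ} (n : ℕ), 0 ≤ x → (x ^ ((n : ℝ) / 4)) ^ 4 = x ^ n := fun n hx => by
    rw [← Real.rpow_natCast _ 4, ← Real.rpow_mul hx, Nat.cast_ofNat,
      div_mul_cancel₀ _ four_ne_zero, Real.rpow_natCast]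
  calc L ^ 4 ≤ (C * K ^ ((3 : ℝ) / 4) * A ^ ((1 : ℝ) / 4)) ^ 4 := by gcongr
    _ = C ^ 4 * K ^ 3 * A := by
        rw [mul_pow, mul_pow, ← Nat.cast_ofNat (R := ℝ) (n := 3), ← Nat.cast_one (R := ℝ),
          hpow 3 hK, hpow 1 hA, pow_one]
    _ ≤ C ^ 4 * r ^ 3 * A := by gcongr

theorem stmt4_general (u u' : ℝ → ℂ) (v : ℝ → ℝ) (C r E₀ : ℝ)
    (hu4 : MemLp u 4 (volume : Measure ℝ)) (hv : MemLp v 2 (volume : Measure ℝ))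
    (hGN : L4C u ≤ C * L2C u ^ ((3:ℝ)/4) * L2C u' ^ ((1:ℝ)/4))
    (hE : L2C u' ^ 2 + L2R v ^ 2 ≤ -2 * (∫ x : ℝ, v x * ‖u x‖^2) + E₀)
    (hu2 : L2C u ≤ r) :
    L2C u' ^ 2 + L2R v ^ 2 ≤ 4 * C^8 * r^6 + 2 * E₀ := by
  have hHolder : L2C u' ^ 2 + L2R v ^ 2 ≤ 2 * L2R v * L4C u ^ 2 + E₀ := by
    have hcoupling : |∫ x : ℝ, v x * ‖u x‖ ^ 2| ≤ L2R v * L4C u ^ 2 :=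
      abs_integral_mul_norm_sq_le hv hu4
    linarith [neg_abs_le (∫ x : ℝ, v x * ‖u x‖ ^ 2)]
  have hL4 : (L4C u ^ 2) ^ 2 ≤ C ^ 4 * r ^ 3 * L2C u' := by
    rw [← pow_mul]
    exact pow_four_le_of_gagliardoNirenberg ENNReal.toReal_nonneg ENNReal.toReal_nonneg
      ENNReal.toReal_nonneg hu2 hGN
  calc L2C u' ^ 2 + L2R v ^ 2 ≤ 4 * (C ^ 4 * r ^ 3) ^ 2 + 2 * E₀ :=
        sq_add_sq_le_of_le_two_mul_add hHolder hL4
    _ = 4 * C ^ 8 * r ^ 6 + 2 * E₀ := by ring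

/-- A priori `H¹×L²` bound for the focusing Schrödinger–Debye system:
if `‖∂ₓu‖₂² + ‖v‖₂² ≤ -2∫ v|u|² + E₀` and `‖u‖₂ ≤ r`, then
`‖∂ₓu‖₂² + ‖v‖₂² ≤ 4C⁸r⁶ + 2E₀`, `C` the Gagliardo–Nirenberg constant. -/
theorem stmt4 (u u' : ℝ → ℂ) (v : ℝ → ℝ) (C r E₀ : ℝ) (hC : 0 ≤ C) (hr : 0 ≤ r)
    (hu : MemLp u 2 (volume : Measure ℝ)) (hu' : MemLp u' 2 (volume : Measure ℝ))
    (hu4 : MemLp u 4 (volume : Measure ℝ)) (hv : MemLp v 2 (volume : Measure ℝ))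
    (hGN : L4C u ≤ C * L2C u ^ ((3:ℝ)/4) * L2C u' ^ ((1:ℝ)/4))
    (hE : L2C u' ^ 2 + L2R v ^ 2 ≤ -2 * (∫ x : ℝ, v x * ‖u x‖^2) + E₀)
    (hu2 : L2C u ≤ r) :
    L2C u' ^ 2 + L2R v ^ 2 ≤ 4 * C^8 * r^6 + 2 * E₀ :=
  stmt4_general u u' v C r E₀ hu4 hv hGN hE hu2
end

section
/- Let u ∈ H¹(ℝ), v ∈ L²(ℝ) real-valued, and suppose ‖∂_x u‖²_{L²} + ‖v‖²_{L²} ≤ 2‖v‖_{L²}‖u‖²_{L⁴} + E₀ with E₀ ≤ 0. If ‖u‖_{L²} ≤ r, then ‖∂_x u‖_{L²} ≤ C⁴ r³, where C is the Gagliardo–Nirenberg constant in ‖f‖_{L⁴} ≤ C ‖f‖_{L²}^{3/4} ‖∂_x f‖_{L²}^{1/4}. -/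
open MeasureTheory

/-- A priori estimate under the nonpositive-energy hypothesis: if
`‖∂ₓu‖₂² + ‖v‖₂² ≤ 2‖v‖₂‖u‖₄² + E₀` with `E₀ ≤ 0` and `‖u‖₂ ≤ r`, then
`‖∂ₓu‖₂ ≤ C⁴ r³`, where `C` is the Gagliardo–Nirenberg constant. -/
theorem stmt5 (u u' : ℝ → ℂ) (v : ℝ → ℝ) (C r E₀ : ℝ) (hC : 0 ≤ C) (hr : 0 ≤ r)
    (hu : MemLp u 2 (volume : Measure ℝ)) (hu' : MemLp u' 2 (volume : Measure ℝ))
    (hu4 : MemLp u 4 (volume : Measure ℝ)) (hv : MemLp v 2 (volume : Measure ℝ))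
    (hGN : L4C u ≤ C * L2C u ^ ((3:ℝ)/4) * L2C u' ^ ((1:ℝ)/4))
    (hE : L2C u' ^ 2 + L2R v ^ 2 ≤ 2 * L2R v * L4C u ^ 2 + E₀)
    (hE₀ : E₀ ≤ 0)
    (hu2 : L2C u ≤ r) :
    L2C u' ≤ C^4 * r^3 := by
  set a := L2C u' with ha
  set b := L2R v with hb
  set m := L4C u with hm
  set c := L2C u with hc
  have ha0 : 0 ≤ a := ENNReal.toReal_nonneg
  have hb0 : 0 ≤ b := ENNReal.toReal_nonneg
  have hm0 : 0 ≤ m := ENNReal.toReal_nonneg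
  have hc0 : 0 ≤ c := ENNReal.toReal_nonneg
  -- a² ≤ m⁴
  have h1 : a ^ 2 ≤ m ^ 4 := by nlinarith [sq_nonneg (b - m ^ 2)]
  -- m⁴ ≤ C⁴ c³ a
  have h2 : m ^ 4 ≤ C ^ 4 * c ^ 3 * a := by
    have h3 : m ^ 4 ≤ (C * c ^ ((3:ℝ)/4) * a ^ ((1:ℝ)/4)) ^ 4 := by
      apply pow_le_pow_left₀ hm0 hGN
    calc m ^ 4 ≤ (C * c ^ ((3:ℝ)/4) * a ^ ((1:ℝ)/4)) ^ 4 := h3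
      _ = C ^ 4 * (c ^ ((3:ℝ)/4)) ^ 4 * (a ^ ((1:ℝ)/4)) ^ 4 := by ring
      _ = C ^ 4 * c ^ 3 * a := by
          rw [← Real.rpow_natCast (c ^ ((3:ℝ)/4)) 4, ← Real.rpow_natCast (a ^ ((1:ℝ)/4)) 4,
            ← Real.rpow_mul hc0, ← Real.rpow_mul ha0]
          have e1 : c ^ ((3:ℝ)/4 * (4:ℕ)) = c ^ (3:ℕ) := by
            rw [show (3:ℝ)/4 * (4:ℕ) = ((3:ℕ):ℝ) by norm_num, Real.rpow_natCast]
          have e2 : a ^ ((1:ℝ)/4 * (4:ℕ)) = a ^ (1:ℕ) := by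
            rw [show (1:ℝ)/4 * (4:ℕ) = ((1:ℕ):ℝ) by norm_num, Real.rpow_natCast]
          rw [e1, e2]; ring
  have key : a ^ 2 ≤ C ^ 4 * c ^ 3 * a := h1.trans h2
  rcases eq_or_lt_of_le ha0 with h | h
  · rw [← h]; positivity
  · have : a ≤ C ^ 4 * c ^ 3 := by
      nlinarith
    calc a ≤ C ^ 4 * c ^ 3 := this
      _ ≤ C ^ 4 * r ^ 3 := by
          gcongr
end
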